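/- Over F_2, let H = [[I, I, I],[I, P, Q]] where P, Q are N×N permutation matrices such that I, P, Q are pairwise non-overlapping (no two of them share a column). If PQ and QP have an overlapping column at position j, then the vector c = ((P+Q)e_j ; (I+Q)e_j ; (I+P)e_j), where e_j is the j-th standard basis vector, is a nonzero codeword of Hamming weight exactly 6 in the null space of H. -/

import Mathlib

/-- A permutation matrix over a ring `R`. -/
def IsPermMatrix {n : Type*} [Fintype n] [DecidableEq n] {R : Type*} [Semiring R]
    (M : Matrix n n R) : Prop :=
  ∃ σ : Equiv.Perm n, M = σ.permMatrix R

/-- Matrices `A` and `B` overlap if some column of `A` equals the corresponding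
column of `B`. -/
def Overlap {n : Type*} {R : Type*} (A B : Matrix n n R) : Prop :=
  ∃ j : n, ∀ i : n, A i j = B i j

/-!
Write `P`, `Q` as the permutation matrices of `σ`, `τ`, and put `a = σ⁻¹ j`, `b = τ⁻¹ j`, so that
`P e_j = e_a` and `Q e_j = e_b`. Then `c = (e_a + e_b ; e_j + e_b ; e_j + e_a)`, and the three
non-overlap conditions say exactly that `a`, `b`, `j` are distinct, so each block has weight 2.
For arbitrary `P`, `Q` over a ring of characteristic 2 one computes
`H c = (0 ; (PQ + QP) e_j)`, which vanishes because `PQ` and `QP` agree in column `j`.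
-/

open Matrix

section

variable {n R : Type*} [DecidableEq n]

lemma Equiv.Perm.symm_apply_ne_of_not_overlap [Zero R] [One R] {σ τ : Equiv.Perm n}
    (h : ¬ Overlap (σ.permMatrix R) (τ.permMatrix R)) (j : n) : σ.symm j ≠ τ.symm j :=
  fun hj => h ⟨j, fun i => by simp [← Equiv.eq_symm_apply, hj]⟩

lemma Equiv.Perm.symm_apply_ne_self_of_not_overlap_one [Zero R] [One R] {σ : Equiv.Perm n}
    (h : ¬ Overlap 1 (σ.permMatrix R)) (j : n) : σ.symm j ≠ j := by
  simpa using
    (symm_apply_ne_of_not_overlap (R := R) (σ := .refl n) (by rwa [permMatrix_refl]) j).symm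

variable [Fintype n]

lemma Equiv.Perm.permMatrix_mulVec_single [CommRing R] (σ : Equiv.Perm n) (j : n) :
    σ.permMatrix R *ᵥ Pi.single j 1 = Pi.single (σ.symm j) 1 := by
  rw [permMatrix_mulVec, Pi.single_comp_equiv]

lemma fromBlocks_mulVec_eq_zero_of_mul_mulVec_comm [CommRing R] [CharP R 2]
    {P Q : Matrix n n R} {v : n → R} (hv : (P * Q) *ᵥ v = (Q * P) *ᵥ v) :
    fromBlocks (1 : Matrix n n R) (fromCols 1 1) 1 (fromCols P Q) *ᵥ
      Sum.elim ((P + Q) *ᵥ v) (Sum.elim ((1 + Q) *ᵥ v) ((1 + P) *ᵥ v)) = 0 := by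
  have h2 : (2 : n → R) = 0 := funext fun _ => CharTwo.two_eq_zero
  simp only [fromBlocks_mulVec, Sum.elim_comp_inl, Sum.elim_comp_inr, fromCols_mulVec_sumElim,
    add_mulVec, mulVec_add, one_mulVec, ← Sum.elim_zero_zero]
  rw [mulVec_mulVec, mulVec_mulVec]
  congr 1
  · linear_combination (P *ᵥ v + Q *ᵥ v + v : n → R) * h2
  · linear_combination (P *ᵥ v + Q *ᵥ v + (Q * P) *ᵥ v : n → R) * h2 + hv

end

lemma hammingNorm_sumElim {α β R : Type*} [Fintype α] [Fintype β] [Zero R] [DecidableEq R]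
    (f : α → R) (g : β → R) : hammingNorm (Sum.elim f g) = hammingNorm f + hammingNorm g := by
  rw [hammingNorm, hammingNorm, hammingNorm, Finset.card_filter, Finset.card_filter,
    Finset.card_filter, Fintype.sum_sum_type]
  rfl

lemma hammingNorm_single_add_single {ι R : Type*} [Fintype ι] [DecidableEq ι] [AddMonoid R]
    [DecidableEq R] {a b : ι} (hab : a ≠ b) {x y : R} (hx : x ≠ 0) (hy : y ≠ 0) :
    hammingNorm (Pi.single a x + Pi.single b y : ι → R) = 2 := by
  rw [hammingNorm, ← Finset.card_pair hab]
  congr 1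
  ext i
  by_cases ha : i = a <;> by_cases hb : i = b <;> simp_all

/-- Over `F_2`, with `H = [[I,I,I],[I,P,Q]]` where `I, P, Q` are pairwise
non-overlapping permutation matrices, if `PQ` and `QP` overlap at column `j`,
then `c = ((P+Q)e_j ; (I+Q)e_j ; (I+P)e_j)` is a nonzero codeword of Hamming
weight exactly 6 in the null space of `H`. -/
theorem weight_six_codeword (N : ℕ)
    (P Q : Matrix (Fin N) (Fin N) (ZMod 2))
    (hP : IsPermMatrix P) (hQ : IsPermMatrix Q)
    (hIP : ¬ Overlap (1 : Matrix (Fin N) (Fin N) (ZMod 2)) P)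
    (hIQ : ¬ Overlap (1 : Matrix (Fin N) (Fin N) (ZMod 2)) Q)
    (hPQ : ¬ Overlap P Q)
    (j : Fin N) (hover : ∀ i : Fin N, (P * Q) i j = (Q * P) i j) :
    let e : Fin N → ZMod 2 := Pi.single j 1
    let H : Matrix (Fin N ⊕ Fin N) (Fin N ⊕ (Fin N ⊕ Fin N)) (ZMod 2) :=
      Matrix.of fun i k =>
        match i, k with
        | Sum.inl a, Sum.inl b => (1 : Matrix (Fin N) (Fin N) (ZMod 2)) a b
        | Sum.inl a, Sum.inr (Sum.inl b) => (1 : Matrix (Fin N) (Fin N) (ZMod 2)) a b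
        | Sum.inl a, Sum.inr (Sum.inr b) => (1 : Matrix (Fin N) (Fin N) (ZMod 2)) a b
        | Sum.inr a, Sum.inl b => (1 : Matrix (Fin N) (Fin N) (ZMod 2)) a b
        | Sum.inr a, Sum.inr (Sum.inl b) => P a b
        | Sum.inr a, Sum.inr (Sum.inr b) => Q a b
    let c : Fin N ⊕ (Fin N ⊕ Fin N) → ZMod 2 :=
      Sum.elim ((P + Q).mulVec e)
        (Sum.elim ((1 + Q).mulVec e) ((1 + P).mulVec e))
    H.mulVec c = 0 ∧ c ≠ 0 ∧
      (Finset.univ.filter fun i => c i ≠ 0).card = 6 := by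
  intro e H c
  obtain ⟨σ, rfl⟩ := hP
  obtain ⟨τ, rfl⟩ := hQ
  have haj := Equiv.Perm.symm_apply_ne_self_of_not_overlap_one hIP j
  have hbj := Equiv.Perm.symm_apply_ne_self_of_not_overlap_one hIQ j
  have hab := Equiv.Perm.symm_apply_ne_of_not_overlap hPQ j
  have hc : c = Sum.elim (Pi.single (σ.symm j) 1 + Pi.single (τ.symm j) 1)
      (Sum.elim (Pi.single j 1 + Pi.single (τ.symm j) 1)
        (Pi.single j 1 + Pi.single (σ.symm j) 1)) := by
    simp only [c, e, add_mulVec, one_mulVec, Equiv.Perm.permMatrix_mulVec_single]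
  have hweight : hammingNorm c = 6 := by
    rw [hc, hammingNorm_sumElim, hammingNorm_sumElim, hammingNorm_single_add_single hab,
      hammingNorm_single_add_single hbj.symm, hammingNorm_single_add_single haj.symm] <;> simp
  have hH : H = fromBlocks 1 (fromCols 1 1) 1 (fromCols (σ.permMatrix _) (τ.permMatrix _)) := by
    ext (a | a) (b | b | b) <;> rfl
  have hcomm : (σ.permMatrix _ * τ.permMatrix _) *ᵥ e = (τ.permMatrix _ * σ.permMatrix _) *ᵥ e := by
    simp only [e, mulVec_single_one]
    exact funext hover
  exact ⟨hH ▸ fromBlocks_mulVec_eq_zero_of_mul_mulVec_comm hcomm,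
    hammingNorm_ne_zero_iff.mp (by omega), hweight⟩
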